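/- Let w ∈ 𝒱 be a generalized snake word. Every circuit Z of the vertex set V(Q_w) of the order polytope O(Q_w) admits a partition Z = Z₊ ∪ Z₋ into two disjoint nonempty subsets such that ∑_{v ∈ Z₊} v = ∑_{v ∈ Z₋} v (an affine dependence in which every element of Z appears with coefficient ±1) and |Z₊| = |Z₋|; in particular every circuit of V(Q_w) has an even number of elements. -/

import Mathlib

/-- The two-letter alphabet `{L, R}` for generalized snake words. -/
inductive Letter : Type
  | L
  | R
  deriving DecidableEq

/-- The element of the generalized snake poset covered by `2m+2` (besides the relations
coming from `2m+3`): it is `2m-1` when the word turns at the `m`-th letter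
(i.e. `m = 1` and `w 1 = L`, or `m ≥ 2` and `w (m-1) ≠ w m`), and `2m` otherwise. -/
def snakeSide (w : ℕ → Letter) (m : ℕ) : ℕ :=
  if (m = 1 ∧ w 1 = Letter.L) ∨ (2 ≤ m ∧ w (m - 1) ≠ w m) then 2 * m - 1 else 2 * m

/-- The covering relation of the generalized snake poset `P(w)` for the word
`ε w₁ ⋯ w_n` (the letter `w i` for `1 ≤ i ≤ n` is the `i`-th letter).
`SnakeCov n w a b` means `a ≺ b`, i.e. `a` is covered by `b`. -/
inductive SnakeCov (n : ℕ) (w : ℕ → Letter) : ℕ → ℕ → Prop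
  | cov10 : SnakeCov n w 1 0
  | cov20 : SnakeCov n w 2 0
  | cov31 : SnakeCov n w 3 1
  | cov32 : SnakeCov n w 3 2
  | covOdd (m : ℕ) (h1 : 1 ≤ m) (h2 : m ≤ n) : SnakeCov n w (2 * m + 3) (2 * m + 1)
  | covBot (m : ℕ) (h1 : 1 ≤ m) (h2 : m ≤ n) : SnakeCov n w (2 * m + 3) (2 * m + 2)
  | covSide (m : ℕ) (h1 : 1 ≤ m) (h2 : m ≤ n) : SnakeCov n w (2 * m + 2) (snakeSide w m)

/-- The order relation of the generalized snake poset `P(w)` on `{0, …, 2n+3}`: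
the reflexive-transitive closure of the covering relation. -/
def SnakeLE (n : ℕ) (w : ℕ → Letter) : ℕ → ℕ → Prop :=
  Relation.ReflTransGen (SnakeCov n w)

theorem snakeCov_lt {n : ℕ} {w : ℕ → Letter} {a b : ℕ} (h : SnakeCov n w a b) : b < a := by
  cases h
  case covSide m h1 h2 => unfold snakeSide; split <;> omega
  all_goals omega

theorem snakeLE_le {n : ℕ} {w : ℕ → Letter} {a b : ℕ} (h : SnakeLE n w a b) : b ≤ a := by
  induction h with
  | refl => exact le_refl a
  | tail _ hc ih => exact le_trans (le_of_lt (snakeCov_lt hc)) ih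

/-- The generalized snake poset `P(ε w₁ ⋯ w_n)` as a type: its elements are `0, 1, …, 2n+3`. -/
def SnakePoset (n : ℕ) (w : ℕ → Letter) : Type := Fin (2 * n + 4)

instance (n : ℕ) (w : ℕ → Letter) : PartialOrder (SnakePoset n w) where
  le a b := SnakeLE n w a.1 b.1
  le_refl _ := Relation.ReflTransGen.refl
  le_trans _ _ _ h1 h2 := Relation.ReflTransGen.trans h1 h2
  le_antisymm a b h1 h2 := Fin.ext (Nat.le_antisymm (snakeLE_le h2) (snakeLE_le h1))

/-- The number of linear extensions of `P(ε w₁ ⋯ w_n)`: order-preserving bijections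
onto the chain `Fin (2n+4)`.  By Stanley's theorem this is the normalized volume of
the order polytope `O(P(w))`. -/
noncomputable def linExtCount (n : ℕ) (w : ℕ → Letter) : ℕ :=
  Nat.card {f : SnakePoset n w ≃ Fin (2 * n + 4) //
    ∀ a b : SnakePoset n w, a ≤ b → f a ≤ f b}

/-- The collection of filters (upper order ideals) of `P(ε w₁ ⋯ w_n)`,
as subsets of `{0, …, 2n+3} ⊆ ℕ`. -/
def SnakeFilters (n : ℕ) (w : ℕ → Letter) : Set (Set ℕ) :=
  {A | (∀ a ∈ A, a < 2 * n + 4) ∧ ∀ a ∈ A, ∀ b, SnakeLE n w a b → b ∈ A}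

/-- The filter of `P(ε w₁ ⋯ w_n)` generated by a set `S`: its upward closure. -/
def snakeUp (n : ℕ) (w : ℕ → Letter) (S : Set ℕ) : Set ℕ :=
  {b | ∃ a ∈ S, SnakeLE n w a b}

/-- The alternating word `L R L R ⋯` (letter `i` is `L` for odd `i`),
defining the snake poset `S_n = P(ε L R L R ⋯)`. -/
def altWord : ℕ → Letter := fun i => if i % 2 = 1 then Letter.L else Letter.R

/-- Flipping a letter `L ↔ R`. -/
def Letter.flip : Letter → Letter
  | Letter.L => Letter.R
  | Letter.R => Letter.L

/-- The swap operation `f_i`: flip all letters with index `≥ i`. -/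
def swapFrom (w : ℕ → Letter) (i : ℕ) : ℕ → Letter :=
  fun j => if i ≤ j then (w j).flip else w j

/-- Membership in `𝒱`: the letter sequence `w₁ ⋯ w_n` contains neither `LRL` nor
`RLR` as a consecutive substring. -/
def InV (n : ℕ) (w : ℕ → Letter) : Prop :=
  ∀ i, 1 ≤ i → i + 2 ≤ n → w i = w (i + 1) ∨ w (i + 1) = w (i + 2)

/-- The order on `{0, …, 2n+5}` making `P̂(w)`: the poset `P(w)` (elements `0, …, 2n+3`)
with a new maximum `2n+4` and a new minimum `2n+5` adjoined. -/
def SnakeHatLE (n : ℕ) (w : ℕ → Letter) (a b : ℕ) : Prop :=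
  a = 2 * n + 5 ∨ b = 2 * n + 4 ∨ (a < 2 * n + 4 ∧ b < 2 * n + 4 ∧ SnakeLE n w a b)

/-- The lattice `P̂(w)`: `P(w)` with a new minimum `0̂ = 2n+5` and maximum `1̂ = 2n+4`. -/
def SnakeHat (n : ℕ) (w : ℕ → Letter) : Type := Fin (2 * n + 6)

instance (n : ℕ) (w : ℕ → Letter) : PartialOrder (SnakeHat n w) where
  le a b := SnakeHatLE n w a.1 b.1
  le_refl a := by
    by_cases h5 : a.1 = 2 * n + 5
    · exact Or.inl h5
    · by_cases h4 : a.1 = 2 * n + 4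
      · exact Or.inr (Or.inl h4)
      · have := a.2
        exact Or.inr (Or.inr ⟨by omega, by omega, Relation.ReflTransGen.refl⟩)
  le_trans a b c hab hbc := by
    rcases hab with h | h | ⟨ha, hb, hab⟩
    · exact Or.inl h
    · rcases hbc with h' | h' | ⟨hb', hc, hbc⟩
      · exact absurd h' (by omega)
      · exact Or.inr (Or.inl h')
      · exact absurd h (by omega)
    · rcases hbc with h' | h' | ⟨hb', hc, hbc⟩
      · exact absurd h' (by omega)
      · exact Or.inr (Or.inl h')
      · exact Or.inr (Or.inr ⟨ha, hc, Relation.ReflTransGen.trans hab hbc⟩)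
  le_antisymm a b h1 h2 := by
    apply Fin.ext
    rcases h1 with h | h | ⟨ha, hb, hab⟩ <;>
      rcases h2 with h' | h' | ⟨ha', hb', hba⟩ <;>
        first
          | omega
          | exact Nat.le_antisymm (snakeLE_le hba) (snakeLE_le hab)

/-- An element `x` of a (finite) lattice is meet-irreducible if it is not the maximum
element and whenever `x` is the meet (greatest lower bound) of `y` and `z`,
one has `x = y` or `x = z`. -/
def MeetIrred {α : Type*} [PartialOrder α] (x : α) : Prop :=
  ¬IsTop x ∧ ∀ y z : α, IsGLB {y, z} x → x = y ∨ x = z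

/-- The poset `Q_w` of meet-irreducible elements of `P̂(w)`, as an induced subposet. -/
abbrev SnakeQ (n : ℕ) (w : ℕ → Letter) : Type :=
  {x : SnakeHat n w // MeetIrred x}

/-- The vertex set of the order polytope `O(α)` of a finite poset `α`: the 0/1 indicator
vectors of the filters of `α`. -/
def OPVertexSet (α : Type*) [PartialOrder α] : Set (α → ℝ) :=
  {v | ∃ A : Set α, (∀ a ∈ A, ∀ b, a ≤ b → b ∈ A) ∧ v = A.indicator fun _ => (1 : ℝ)}

/-- A circuit of a point configuration: an affinely dependent set all of whose proper
subsets are affinely independent. -/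
def IsAffCircuit {α : Type*} (Z : Set (α → ℝ)) : Prop :=
  ¬AffineIndependent ℝ (Subtype.val : Z → (α → ℝ)) ∧
    ∀ Y : Set (α → ℝ), Y ⊂ Z → AffineIndependent ℝ (Subtype.val : Y → (α → ℝ))

/-- The adjacency relation of the graph `G(w)` on vertices `{0, 1, …, n}`:
consecutive indices are adjacent, and `i` and `i+2` are adjacent when
`w (i+1) ≠ w (i+2)` (a turn of the word). -/
def snakeAdj (n : ℕ) (w : ℕ → Letter) (i j : ℕ) : Prop :=
  (j = i + 1 ∧ j ≤ n) ∨ (i = j + 1 ∧ i ≤ n) ∨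
    (j = i + 2 ∧ j ≤ n ∧ w (i + 1) ≠ w (i + 2)) ∨
    (i = j + 2 ∧ i ≤ n ∧ w (j + 1) ≠ w (j + 2))

/-- `𝒢(w)`: the collection of nonempty subsets of `{0, …, n}` inducing connected
subgraphs of `G(w)`. -/
def GSets (n : ℕ) (w : ℕ → Letter) : Set (Set ℕ) :=
  {S | S.Nonempty ∧ (∀ i ∈ S, i ≤ n) ∧
    ∀ a ∈ S, ∀ b ∈ S,
      Relation.ReflTransGen (fun x y => x ∈ S ∧ y ∈ S ∧ snakeAdj n w x y) a b}

/-!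
Since `P(w)` is a ladder whose levels `{2m+1, 2m+2}` are joined by covers, `P̂(w)`, and with it
`Q_w`, is covered by two chains. For a poset covered by two chains, a filter is determined by the
numbers of its elements on either chain, and every coordinate of its indicator vector is a
threshold function of one of these two counts. An affine dependence among vertices therefore
amounts to weights on the cells of a grid with vanishing row and column sums. Walking from a vertex
of nonzero weight alternately along its row and its column, always to a vertex of opposite sign,
closes up into an even cycle whose vertices, with signs `±1`, again have vanishing row and column
sums; by minimality of the circuit this cycle is all of `Z`.
-/

open Finset

section AlternatingCycle

theorem mod_two_eq_of_mul_succ_neg {x : ℕ → ℝ} (hx : ∀ k, x (k + 1) * x k < 0) {i j : ℕ}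
    (hij : x i = x j) : i % 2 = j % 2 := by
  have hsign : ∀ k, 0 < x k ↔ (k % 2 = 0 ↔ 0 < x 0) := by
    intro k
    induction k with
    | zero => simp
    | succ k ih =>
      have hflip : 0 < x (k + 1) ↔ ¬0 < x k := by
        rcases mul_neg_iff.1 (hx k) with ⟨h1, h2⟩ | ⟨h1, h2⟩
        · exact iff_of_true h1 h2.not_gt
        · exact iff_of_false h1.not_gt (not_not.2 h2)
      have hpar : (k + 1) % 2 = 0 ↔ ¬k % 2 = 0 := by omega
      rw [hflip, ih, hpar]
      tauto
  have hi := hsign i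
  rw [hij, hsign j] at hi
  by_cases h0 : 0 < x 0 <;> simp only [h0, iff_true, iff_false] at hi <;> omega

theorem sum_Ico_neg_one_pow_mul_eq_zero_of_pairs {g : ℕ → ℝ} {a : ℕ}
    (hpair : ∀ j, j % 2 = a % 2 → g (j + 1) = g j) (m : ℕ) :
    ∑ j ∈ Ico a (a + 2 * m), (-1 : ℝ) ^ j * g j = 0 := by
  induction m with
  | zero => simp
  | succ m ih =>
    rw [show a + 2 * (m + 1) = a + 2 * m + 1 + 1 by ring, sum_Ico_succ_top (by omega),
      sum_Ico_succ_top (by omega), ih, hpair (a + 2 * m) (by omega), pow_succ]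
    ring

theorem sum_Ico_neg_one_pow_mul_eq_zero {g : ℕ → ℝ} {a d r : ℕ} (hd : d % 2 = 0)
    (hret : g (a + d) = g a) (hpair : ∀ j, j % 2 = r % 2 → g (j + 1) = g j) :
    ∑ j ∈ Ico a (a + d), (-1 : ℝ) ^ j * g j = 0 := by
  obtain ⟨m, rfl⟩ : ∃ m, d = 2 * m := ⟨d / 2, by omega⟩
  by_cases ha : a % 2 = r % 2
  · exact sum_Ico_neg_one_pow_mul_eq_zero_of_pairs (fun j hj => hpair j (hj.trans ha)) m
  rcases m.eq_zero_or_pos with rfl | hm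
  · simp
  have hshift : ∑ j ∈ Ico a (a + 2 * m), (-1 : ℝ) ^ j * g j =
      ∑ j ∈ Ico (a + 1) (a + 1 + 2 * m), (-1 : ℝ) ^ j * g j := by
    rw [sum_eq_sum_Ico_succ_bot (by omega), show a + 1 + 2 * m = a + 2 * m + 1 by ring,
      sum_Ico_succ_top (by omega), hret, pow_add, (Nat.even_iff.2 hd).neg_one_pow, mul_one]
    ring
  rw [hshift]
  exact sum_Ico_neg_one_pow_mul_eq_zero_of_pairs (fun j hj => hpair j (by omega)) m

theorem sum_filter_even_eq_sum_filter_odd {I : Finset ℕ} {g : ℕ → ℝ}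
    (h : ∑ j ∈ I, (-1 : ℝ) ^ j * g j = 0) :
    ∑ j ∈ I with j % 2 = 0, g j = ∑ j ∈ I with j % 2 ≠ 0, g j := by
  rw [← sum_filter_add_sum_filter_not I (· % 2 = 0)] at h
  have heven : ∑ j ∈ I with j % 2 = 0, (-1 : ℝ) ^ j * g j = ∑ j ∈ I with j % 2 = 0, g j :=
    sum_congr rfl fun j hj => by
      rw [(Nat.even_iff.2 (mem_filter.1 hj).2).neg_one_pow, one_mul]
  have hodd : ∑ j ∈ I with ¬j % 2 = 0, (-1 : ℝ) ^ j * g j = -∑ j ∈ I with j % 2 ≠ 0, g j := by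
    rw [← sum_neg_distrib]
    exact sum_congr rfl fun j hj => by
      rw [(Nat.odd_iff.2 (by have := (mem_filter.1 hj).2; omega)).neg_one_pow, neg_one_mul]
  rw [heven, hodd] at h
  linarith

theorem exists_return_injOn_Ico {V : Type*} {Z : Finset V} {f : ℕ → V} (hf : ∀ k, f k ∈ Z) :
    ∃ a d, 0 < d ∧ f (a + d) = f a ∧ Set.InjOn f (Ico a (a + d)) := by
  classical
  have hD : ∃ d, 0 < d ∧ ∃ a, f (a + d) = f a := by
    obtain ⟨k, l, hkl, hkl'⟩ := Finite.exists_ne_map_eq_of_infinite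
      (fun k => (⟨f k, hf k⟩ : Z))
    have hkl' : f k = f l := congrArg Subtype.val hkl'
    rcases Nat.lt_or_gt_of_ne hkl with h | h
    · exact ⟨l - k, by omega, k, by rw [Nat.add_sub_cancel' h.le, hkl']⟩
    · exact ⟨k - l, by omega, l, by rw [Nat.add_sub_cancel' h.le, hkl']⟩
  obtain ⟨hd, a, ha⟩ := Nat.find_spec hD
  refine ⟨a, Nat.find hD, hd, ha, fun j hj j' hj' hjj' => ?_⟩
  simp only [coe_Ico, Set.mem_Ico] at hj hj'
  by_contra hne
  rcases Nat.lt_or_gt_of_ne hne with h | h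
  · exact Nat.find_min hD (show j' - j < Nat.find hD by omega)
      ⟨by omega, j, by rw [Nat.add_sub_cancel' h.le, hjj']⟩
  · exact Nat.find_min hD (show j - j' < Nat.find hD by omega)
      ⟨by omega, j', by rw [Nat.add_sub_cancel' h.le, hjj']⟩

variable {V κ : Type*} [DecidableEq κ]

/-- Viewing `v` as the cell `(key true v, key false v)` of a grid: all row and column sums of the
weights `c` vanish. -/
def FiberBalanced (key : Bool → V → κ) (Z : Finset V) (c : V → ℝ) : Prop :=
  ∀ s m, ∑ v ∈ Z with key s v = m, c v = 0

variable {key : Bool → V → κ} {Z : Finset V} {c : V → ℝ}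

theorem FiberBalanced.exists_mem_mul_neg (hc : FiberBalanced key Z c) (s : Bool) {v : V}
    (hv : v ∈ Z) (hcv : c v ≠ 0) : ∃ v' ∈ Z, key s v' = key s v ∧ c v' * c v < 0 := by
  by_contra! hcon
  have hpos : 0 < ∑ v' ∈ Z with key s v' = key s v, c v' * c v :=
    sum_pos' (fun v' hv' => hcon v' (mem_filter.1 hv').1 (mem_filter.1 hv').2)
      ⟨v, mem_filter.2 ⟨hv, rfl⟩, mul_self_pos.2 hcv⟩
  rw [← sum_mul, hc s (key s v), zero_mul] at hpos
  exact lt_irrefl 0 hpos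

theorem FiberBalanced.exists_alternating_walk (hc : FiberBalanced key Z c) {v₀ : V}
    (hv₀ : v₀ ∈ Z) (hcv₀ : c v₀ ≠ 0) :
    ∃ f : ℕ → V, (∀ k, f k ∈ Z) ∧
      (∀ k, key (decide (k % 2 = 0)) (f (k + 1)) = key (decide (k % 2 = 0)) (f k)) ∧
      ∀ k, c (f (k + 1)) * c (f k) < 0 := by
  have hstep : ∀ (v : {v // v ∈ Z ∧ c v ≠ 0}) (s : Bool), ∃ v' : {v // v ∈ Z ∧ c v ≠ 0},
      key s v'.1 = key s v.1 ∧ c v'.1 * c v.1 < 0 := by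
    rintro ⟨v, hv, hcv⟩ s
    obtain ⟨v', hv', hkey, hneg⟩ := hc.exists_mem_mul_neg s hv hcv
    exact ⟨⟨v', hv', left_ne_zero_of_mul hneg.ne⟩, hkey, hneg⟩
  choose next hkey hneg using hstep
  let f : ℕ → {v // v ∈ Z ∧ c v ≠ 0} :=
    fun k => Nat.rec ⟨v₀, hv₀, hcv₀⟩ (fun k fk => next fk (decide (k % 2 = 0))) k
  exact ⟨fun k => (f k).1, fun k => (f k).2.1, fun k => hkey _ _, fun k => hneg _ _⟩

/-- `Zp` and `Zm` are the even- and odd-indexed vertices of the first closed stretch of an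
alternating walk. -/
theorem FiberBalanced.exists_card_filter_eq [DecidableEq V] (hc : FiberBalanced key Z c)
    {v₀ : V} (hv₀ : v₀ ∈ Z) (hcv₀ : c v₀ ≠ 0) :
    ∃ Zp Zm : Finset V, Zp ⊆ Z ∧ Zm ⊆ Z ∧ Disjoint Zp Zm ∧ Zp.Nonempty ∧
      ∀ s m, #{v ∈ Zp | key s v = m} = #{v ∈ Zm | key s v = m} := by
  obtain ⟨f, hfZ, hkey, hsign⟩ := hc.exists_alternating_walk hv₀ hcv₀
  obtain ⟨a, d, hd, hret, hinj⟩ := exists_return_injOn_Ico hfZ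
  have hdeven : d % 2 = 0 := by
    have := mod_two_eq_of_mul_succ_neg (x := fun k => c (f k)) hsign (congrArg c hret)
    omega
  have hinjOn (p : ℕ → Prop) [DecidablePred p] : Set.InjOn f ↑{j ∈ Ico a (a + d) | p j} :=
    hinj.mono (coe_subset.2 (filter_subset _ _))
  refine ⟨{j ∈ Ico a (a + d) | j % 2 = 0}.image f, {j ∈ Ico a (a + d) | j % 2 ≠ 0}.image f,
    image_subset_iff.2 fun j _ => hfZ j, image_subset_iff.2 fun j _ => hfZ j, ?_, ?_, ?_⟩
  · refine disjoint_left.2 fun v hvp hvm => ?_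
    obtain ⟨j, hj, rfl⟩ := mem_image.1 hvp
    obtain ⟨j', hj', hjj'⟩ := mem_image.1 hvm
    rw [mem_filter] at hj hj'
    have := hinj (mem_coe.2 hj'.1) (mem_coe.2 hj.1) hjj'
    omega
  · rcases Nat.mod_two_eq_zero_or_one a with ha | ha
    · exact ⟨f a, mem_image_of_mem f (mem_filter.2 ⟨mem_Ico.2 ⟨le_rfl, by omega⟩, ha⟩)⟩
    · exact ⟨f (a + 1),
        mem_image_of_mem f (mem_filter.2 ⟨mem_Ico.2 ⟨by omega, by omega⟩, by omega⟩)⟩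
  · intro s m
    have hsum := sum_Ico_neg_one_pow_mul_eq_zero (g := fun j => if key s (f j) = m then 1 else 0)
      (r := if s then 0 else 1) hdeven (by rw [hret]) fun j hj => by
        have hs : decide (j % 2 = 0) = s := by cases s <;> simp at hj ⊢ <;> omega
        simp only [← hs, hkey j]
    have := sum_filter_even_eq_sum_filter_odd hsum
    simp only [sum_boole, filter_filter] at this
    rw [filter_image, filter_image, filter_filter, filter_filter, card_image_of_injOn (hinjOn _),
      card_image_of_injOn (hinjOn _)]
    exact_mod_cast this

end AlternatingCycle

theorem sum_comp_eq_of_card_filter_eq {V κ M : Type*} [DecidableEq κ] [AddCommMonoid M]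
    {Zp Zm : Finset V} {key : V → κ}
    (hcard : ∀ m, #{v ∈ Zp | key v = m} = #{v ∈ Zm | key v = m}) (g : κ → M) :
    ∑ v ∈ Zp, g (key v) = ∑ v ∈ Zm, g (key v) := by
  classical
  have hfiber (Y : Finset V) (m : κ) :
      ∑ v ∈ Y with key v = m, g (key v) = #{v ∈ Y | key v = m} • g m := by
    rw [← sum_const]
    exact sum_congr rfl fun v hv => by rw [(mem_filter.1 hv).2]
  rw [← sum_fiberwise_of_maps_to (t := (Zp ∪ Zm).image key)
      fun v hv => mem_image_of_mem key (mem_union_left _ hv),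
    ← sum_fiberwise_of_maps_to (t := (Zp ∪ Zm).image key)
      fun v hv => mem_image_of_mem key (mem_union_right _ hv)]
  simp only [hfiber, hcard]

theorem not_affineIndependent_of_sum_eq_sum {E : Type*} [AddCommGroup E] [Module ℝ E]
    [DecidableEq E] {Zp Zm : Finset E} (hdisj : Disjoint Zp Zm) (hne : Zp.Nonempty)
    (hcard : #Zp = #Zm) (hsum : ∑ v ∈ Zp, v = ∑ v ∈ Zm, v) :
    ¬AffineIndependent ℝ ((↑) : (Zp ∪ Zm : Finset E) → E) := by
  intro hAI
  obtain ⟨v, hv⟩ := hne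
  have h := hAI.eq_zero_of_sum_eq_zero_subtype (w := fun v => if v ∈ Zp then (1 : ℝ) else -1)
    ?_ ?_ v (mem_union_left _ hv)
  · simp [hv] at h
  · rw [sum_union hdisj, sum_ite_of_true fun _ h => h,
      sum_ite_of_false fun _ h => disjoint_right.1 hdisj h]
    simp [hcard]
  · simp only [ite_smul, one_smul, neg_one_smul]
    rw [sum_union hdisj, sum_ite_of_true fun _ h => h,
      sum_ite_of_false fun _ h => disjoint_right.1 hdisj h, sum_neg_distrib, hsum, add_neg_cancel]

section TwoChains

open scoped Classical

variable {α : Type*} [Fintype α]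

noncomputable def chainCount (side : α → Bool) (s : Bool) (v : α → ℝ) : ℕ :=
  #{q | side q = s ∧ v q = 1}

theorem chainCount_indicator {side : α → Bool} (s : Bool) (A : Set α) :
    chainCount side s (A.indicator fun _ => 1) = #{p | side p = s ∧ p ∈ A} := by
  unfold chainCount
  congr 1
  refine filter_congr fun p _ => and_congr_right fun _ => ?_
  by_cases hp : p ∈ A <;> simp [hp]

variable [PartialOrder α] {side : α → Bool}

noncomputable def chainRank (side : α → Bool) (q : α) : ℕ :=
  #{p | side p = side q ∧ q ≤ p}

theorem mem_iff_chainRank_le (hside : ∀ p q, side p = side q → p ≤ q ∨ q ≤ p) {A : Set α}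
    (hA : IsUpperSet A) (q : α) :
    q ∈ A ↔ chainRank side q ≤ #{p | side p = side q ∧ p ∈ A} := by
  refine ⟨fun hq => card_le_card fun p hp => ?_, fun hle => ?_⟩
  · simp only [mem_filter, mem_univ, true_and] at hp ⊢
    exact ⟨hp.1, hA hp.2 hq⟩
  by_contra hq
  refine hle.not_gt (card_lt_card
    ((ssubset_iff_of_subset fun p hp => ?_).2 ⟨q, by simp, by simp [hq]⟩))
  simp only [mem_filter, mem_univ, true_and] at hp ⊢
  refine ⟨hp.1, (hside p q hp.1).resolve_left fun hpq => hq (hA hpq hp.2)⟩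

theorem apply_eq_ite_chainRank_le (hside : ∀ p q, side p = side q → p ≤ q ∨ q ≤ p)
    {v : α → ℝ} (hv : v ∈ OPVertexSet α) (q : α) :
    v q = if chainRank side q ≤ chainCount side (side q) v then 1 else 0 := by
  obtain ⟨A, hA, rfl⟩ := hv
  rw [chainCount_indicator, Set.indicator_apply]
  exact if_congr (mem_iff_chainRank_le hside (fun _ _ hab ha => hA _ ha _ hab) q) rfl rfl

theorem exists_chainRank_eq_chainCount (hside : ∀ p q, side p = side q → p ≤ q ∨ q ≤ p)
    {v : α → ℝ} (hv : v ∈ OPVertexSet α) {s : Bool} (hpos : 0 < chainCount side s v) :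
    ∃ q, side q = s ∧ chainRank side q = chainCount side s v := by
  obtain ⟨A, hA, rfl⟩ := hv
  rw [chainCount_indicator] at hpos ⊢
  obtain ⟨q, hq, hmin⟩ := exists_minimal (card_pos.1 hpos)
  simp only [mem_filter, mem_univ, true_and] at hq
  refine ⟨q, hq.1, congrArg card (filter_congr fun p _ => ?_)⟩
  rw [hq.1]
  refine and_congr_right fun hp => ⟨fun hqp => hA q hq.2 p hqp, fun hpA => ?_⟩
  refine (hside p q (hp.trans hq.1.symm)).elim (fun hpq => ?_) id
  exact hmin (by simp [hp, hpA]) hpq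

/-- The coordinate at an element `q` with `chainRank q = h` detects the vertices with count at
least `h`. -/
theorem sum_filter_le_chainCount_eq_zero (hside : ∀ p q, side p = side q → p ≤ q ∨ q ≤ p)
    {Z : Finset (α → ℝ)} (hZ : ↑Z ⊆ OPVertexSet α) {c : (α → ℝ) → ℝ}
    (hc0 : ∑ v ∈ Z, c v = 0) (hc1 : ∑ v ∈ Z, c v • v = 0) (s : Bool) (h : ℕ) :
    ∑ v ∈ Z with h ≤ chainCount side s v, c v = 0 := by
  rcases h.eq_zero_or_pos with rfl | hpos
  · simpa using hc0
  rcases (Z.filter (h ≤ chainCount side s ·)).eq_empty_or_nonempty with hempty | hne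
  · rw [hempty, sum_empty]
  obtain ⟨v₀, hv₀, hmin⟩ := exists_min_image _ (chainCount side s) hne
  rw [mem_filter] at hv₀
  obtain ⟨q, hqs, hq⟩ :=
    exists_chainRank_eq_chainCount hside (hZ hv₀.1) (hpos.trans_le hv₀.2)
  have hle_iff : ∀ v ∈ Z, h ≤ chainCount side s v ↔ chainRank side q ≤ chainCount side s v :=
    fun v hv => ⟨fun hle => hq ▸ hmin v (mem_filter.2 ⟨hv, hle⟩), fun hle => hv₀.2.trans (hq ▸ hle)⟩
  calc ∑ v ∈ Z with h ≤ chainCount side s v, c v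
      = ∑ v ∈ Z, c v * v q := by
        rw [sum_filter]
        refine sum_congr rfl fun v hv => ?_
        rw [apply_eq_ite_chainRank_le hside (hZ hv) q, hqs, ← if_congr (hle_iff v hv) rfl rfl]
        split_ifs <;> ring
    _ = 0 := by simpa using congrFun hc1 q

theorem fiberBalanced_chainCount (hside : ∀ p q, side p = side q → p ≤ q ∨ q ≤ p)
    {Z : Finset (α → ℝ)} (hZ : ↑Z ⊆ OPVertexSet α) {c : (α → ℝ) → ℝ}
    (hc0 : ∑ v ∈ Z, c v = 0) (hc1 : ∑ v ∈ Z, c v • v = 0) :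
    FiberBalanced (chainCount side) Z c := by
  intro s m
  have hsplit : ∑ v ∈ Z with m ≤ chainCount side s v, c v =
      ∑ v ∈ Z with chainCount side s v = m, c v +
        ∑ v ∈ Z with m + 1 ≤ chainCount side s v, c v := by
    rw [← sum_union (disjoint_filter.2 fun v _ h1 h2 => by omega), ← filter_or]
    exact sum_congr (filter_congr fun v _ => by omega) fun _ _ => rfl
  linarith [sum_filter_le_chainCount_eq_zero hside hZ hc0 hc1 s m,
    sum_filter_le_chainCount_eq_zero hside hZ hc0 hc1 s (m + 1)]

theorem sum_eq_sum_of_card_filter_chainCount_eq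
    (hside : ∀ p q, side p = side q → p ≤ q ∨ q ≤ p) {Zp Zm : Finset (α → ℝ)}
    (hZp : ↑Zp ⊆ OPVertexSet α) (hZm : ↑Zm ⊆ OPVertexSet α)
    (hcard : ∀ s m, #{v ∈ Zp | chainCount side s v = m} = #{v ∈ Zm | chainCount side s v = m}) :
    ∑ v ∈ Zp, v = ∑ v ∈ Zm, v := by
  funext q
  rw [Finset.sum_apply, Finset.sum_apply,
    sum_congr rfl fun v hv => apply_eq_ite_chainRank_le hside (hZp hv) q,
    sum_congr rfl fun v hv => apply_eq_ite_chainRank_le hside (hZm hv) q]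
  exact sum_comp_eq_of_card_filter_eq (hcard (side q))
    fun m => if chainRank side q ≤ m then 1 else 0

theorem finite_opVertexSet : (OPVertexSet α).Finite :=
  (Set.finite_range fun A : Set α => A.indicator fun _ => (1 : ℝ)).subset
    fun _ ⟨A, _, hv⟩ => ⟨A, hv.symm⟩

theorem IsAffCircuit.even_ncard_and_exists_balanced_partition
    (hside : ∀ p q, side p = side q → p ≤ q ∨ q ≤ p) {Z : Set (α → ℝ)}
    (hZ : Z ⊆ OPVertexSet α) (hcirc : IsAffCircuit Z) :
    Even Z.ncard ∧
      ∃ Zp Zm : Set (α → ℝ),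
        Zp ∪ Zm = Z ∧ Disjoint Zp Zm ∧ Zp.Nonempty ∧ Zm.Nonempty ∧
          (∑ᶠ v ∈ Zp, v) = (∑ᶠ v ∈ Zm, v) ∧ Zp.ncard = Zm.ncard := by
  obtain ⟨Z, rfl⟩ := (finite_opVertexSet.subset hZ).exists_finset_coe
  obtain ⟨c, hc1, hc0, v₀, hv₀, hcv₀⟩ :=
    exists_nontrivial_relation_sum_zero_of_not_affine_ind hcirc.1
  obtain ⟨Zp, Zm, hZp, hZm, hdisj, hne, hcard⟩ :=
    (fiberBalanced_chainCount hside hZ hc0 hc1).exists_card_filter_eq hv₀ hcv₀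
  have hsum := sum_eq_sum_of_card_filter_chainCount_eq hside ((coe_subset.2 hZp).trans hZ)
    ((coe_subset.2 hZm).trans hZ) hcard
  have hcard' : #Zp = #Zm := by
    rw [card_eq_sum_ones, card_eq_sum_ones]
    exact sum_comp_eq_of_card_filter_eq (hcard true) fun _ => 1
  have hunion : Zp ∪ Zm = Z := by
    by_contra hne'
    refine not_affineIndependent_of_sum_eq_sum hdisj hne hcard' hsum (hcirc.2 _ ?_)
    exact coe_ssubset.2 (ssubset_of_subset_of_ne (union_subset hZp hZm) hne')
  subst hunion
  refine ⟨?_, Zp, Zm, (coe_union _ _).symm, disjoint_coe.2 hdisj, hne,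
    card_pos.1 (hcard' ▸ hne.card_pos), ?_, ?_⟩
  · rw [Set.ncard_coe_finset, card_union_of_disjoint hdisj, hcard']
    exact ⟨#Zm, rfl⟩
  · rwa [finsum_mem_coe_finset, finsum_mem_coe_finset]
  · rw [Set.ncard_coe_finset, Set.ncard_coe_finset, hcard']

end TwoChains

section SnakeChains

variable (n : ℕ) (w : ℕ → Letter)

theorem snakeSide_succ_eq_or (m : ℕ) :
    snakeSide w (m + 1) = 2 * m + 1 ∨ snakeSide w (m + 1) = 2 * m + 2 := by
  unfold snakeSide
  split <;> omega

def turnParity : ℕ → Bool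
  | 0 => false
  | m + 1 => xor (turnParity m) (decide (snakeSide w (m + 1) = 2 * m + 1))

/-- Level `m ≤ n` of `P(w)` is `{2m+1, 2m+2}`; `snakeChain w s` picks one element of each level,
so that consecutive picks form a cover, and `snakeChain w true`, `snakeChain w false` pick
complementary elements. -/
def snakeChain (s : Bool) (m : ℕ) : ℕ :=
  if turnParity w m = s then 2 * m + 2 else 2 * m + 1

/-- Which of the two chains `snakeChain w true`, `snakeChain w false` contains `x`. -/
def snakeChainSide (x : ℕ) : Bool :=
  xor (turnParity w ((x - 1) / 2)) (decide (x % 2 = 1))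

variable {n w}

theorem snakeCov_odd {k : ℕ} (hk : k ≤ n) : SnakeCov n w (2 * k + 3) (2 * k + 1) := by
  rcases k.eq_zero_or_pos with rfl | hk0
  · exact SnakeCov.cov31
  · exact SnakeCov.covOdd k hk0 hk

theorem snakeCov_odd_even {k : ℕ} (hk : k ≤ n) : SnakeCov n w (2 * k + 3) (2 * k + 2) := by
  rcases k.eq_zero_or_pos with rfl | hk0
  · exact SnakeCov.cov32
  · exact SnakeCov.covBot k hk0 hk

theorem snakeCov_snakeChain_succ (s : Bool) {m : ℕ} (hm : m < n) :
    SnakeCov n w (snakeChain w s (m + 1)) (snakeChain w s m) := by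
  have hside := SnakeCov.covSide (n := n) (w := w) (m + 1) (by omega) hm
  have hodd : SnakeCov n w (2 * (m + 1) + 1) (2 * m + 1) := snakeCov_odd hm.le
  have hodd_even : SnakeCov n w (2 * (m + 1) + 1) (2 * m + 2) := snakeCov_odd_even hm.le
  rcases snakeSide_succ_eq_or w m with h | h <;> rw [h] at hside <;>
    cases s <;> cases hp : turnParity w m <;> simp_all [snakeChain, turnParity]

theorem snakeLE_snakeChain (s : Bool) {m m' : ℕ} (hmm' : m ≤ m') (hm' : m' ≤ n) :
    SnakeLE n w (snakeChain w s m') (snakeChain w s m) := by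
  induction m', hmm' using Nat.le_induction with
  | base => exact Relation.ReflTransGen.refl
  | succ k _ ih =>
    exact Relation.ReflTransGen.head (snakeCov_snakeChain_succ s hm') (ih (by omega))

theorem snakeLE_snakeChain_zero (s : Bool) {m : ℕ} (hm : m ≤ n) :
    SnakeLE n w (snakeChain w s m) 0 := by
  refine (snakeLE_snakeChain s (Nat.zero_le m) hm).tail ?_
  cases s
  · exact SnakeCov.cov20
  · exact SnakeCov.cov10

theorem snakeLE_bot_snakeChain (s : Bool) {m : ℕ} (hm : m ≤ n) :
    SnakeLE n w (2 * n + 3) (snakeChain w s m) := by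
  refine Relation.ReflTransGen.head ?_ (snakeLE_snakeChain s hm le_rfl)
  unfold snakeChain
  split
  · exact snakeCov_odd_even le_rfl
  · exact snakeCov_odd le_rfl

theorem snakeChain_snakeChainSide {x : ℕ} (hx : x ≠ 0) :
    snakeChain w (snakeChainSide w x) ((x - 1) / 2) = x := by
  unfold snakeChain snakeChainSide
  cases turnParity w ((x - 1) / 2) <;> by_cases hpar : x % 2 = 1 <;> simp [hpar] <;> omega

theorem snakeLE_total_of_snakeChainSide_eq {x y : ℕ} (hx : x < 2 * n + 4) (hy : y < 2 * n + 4)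
    (hxy : snakeChainSide w x = snakeChainSide w y) : SnakeLE n w x y ∨ SnakeLE n w y x := by
  have hlevel : ∀ z < 2 * n + 4, z ≠ 0 → z ≠ 2 * n + 3 →
      snakeChain w (snakeChainSide w z) ((z - 1) / 2) = z ∧ (z - 1) / 2 ≤ n :=
    fun z hz hz0 hz3 => ⟨snakeChain_snakeChainSide hz0, by omega⟩
  have hbot : ∀ z < 2 * n + 4, SnakeLE n w (2 * n + 3) z := by
    intro z hz
    by_cases hz0 : z = 0
    · exact hz0 ▸ (snakeLE_bot_snakeChain true le_rfl).trans (snakeLE_snakeChain_zero true le_rfl)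
    by_cases hz3 : z = 2 * n + 3
    · exact hz3 ▸ Relation.ReflTransGen.refl
    obtain ⟨hz, hzn⟩ := hlevel z hz hz0 hz3
    exact hz ▸ snakeLE_bot_snakeChain _ hzn
  have htop : ∀ z < 2 * n + 4, SnakeLE n w z 0 := by
    intro z hz
    by_cases hz0 : z = 0
    · exact hz0 ▸ Relation.ReflTransGen.refl
    by_cases hz3 : z = 2 * n + 3
    · exact hz3 ▸ (snakeLE_bot_snakeChain true le_rfl).trans (snakeLE_snakeChain_zero true le_rfl)
    obtain ⟨hz, hzn⟩ := hlevel z hz hz0 hz3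
    exact hz ▸ snakeLE_snakeChain_zero _ hzn
  by_cases hx0 : x = 0
  · exact Or.inr (hx0 ▸ htop y hy)
  by_cases hx3 : x = 2 * n + 3
  · exact Or.inl (hx3 ▸ hbot y hy)
  by_cases hy0 : y = 0
  · exact Or.inl (hy0 ▸ htop x hx)
  by_cases hy3 : y = 2 * n + 3
  · exact Or.inr (hy3 ▸ hbot x hx)
  obtain ⟨hx', hxn⟩ := hlevel x hx hx0 hx3
  obtain ⟨hy', hyn⟩ := hlevel y hy hy0 hy3
  rw [← hx', ← hy', hxy]
  rcases Nat.le_total ((x - 1) / 2) ((y - 1) / 2) with h | h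
  · exact Or.inr (snakeLE_snakeChain _ h hyn)
  · exact Or.inl (snakeLE_snakeChain _ h hxn)

theorem snakeHat_le_total_of_snakeChainSide_eq (a b : SnakeHat n w)
    (hab : snakeChainSide w a.1 = snakeChainSide w b.1) : a ≤ b ∨ b ≤ a := by
  change SnakeHatLE n w a.1 b.1 ∨ SnakeHatLE n w b.1 a.1
  by_cases hP : a.1 < 2 * n + 4 ∧ b.1 < 2 * n + 4
  · exact (snakeLE_total_of_snakeChainSide_eq hP.1 hP.2 hab).imp
      (fun h => Or.inr (Or.inr ⟨hP.1, hP.2, h⟩)) fun h => Or.inr (Or.inr ⟨hP.2, hP.1, h⟩)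
  have ha := a.2
  have hb := b.2
  unfold SnakeHatLE
  omega

end SnakeChains

theorem stmt12_general (n : ℕ) (w : ℕ → Letter) :
    ∀ Z : Set (SnakeQ n w → ℝ), Z ⊆ OPVertexSet (SnakeQ n w) → IsAffCircuit Z →
      Even Z.ncard ∧
        ∃ Zp Zm : Set (SnakeQ n w → ℝ),
          Zp ∪ Zm = Z ∧ Disjoint Zp Zm ∧ Zp.Nonempty ∧ Zm.Nonempty ∧
            (∑ᶠ v ∈ Zp, v) = (∑ᶠ v ∈ Zm, v) ∧ Zp.ncard = Zm.ncard := by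
  classical
  have : Fintype (SnakeHat n w) := inferInstanceAs (Fintype (Fin (2 * n + 6)))
  intro Z hZ hcirc
  exact hcirc.even_ncard_and_exists_balanced_partition (side := fun q => snakeChainSide w q.1.1)
    (fun p q h => snakeHat_le_total_of_snakeChainSide_eq p.1 q.1 h) hZ

theorem stmt12 (n : ℕ) (w : ℕ → Letter) (hw : InV n w) :
    ∀ Z : Set (SnakeQ n w → ℝ), Z ⊆ OPVertexSet (SnakeQ n w) → IsAffCircuit Z →
      Even Z.ncard ∧
        ∃ Zp Zm : Set (SnakeQ n w → ℝ),
          Zp ∪ Zm = Z ∧ Disjoint Zp Zm ∧ Zp.Nonempty ∧ Zm.Nonempty ∧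
            (∑ᶠ v ∈ Zp, v) = (∑ᶠ v ∈ Zm, v) ∧ Zp.ncard = Zm.ncard :=
  stmt12_general n w
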